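/- Let a and b be positive integers with gcd(a, b) > 1, let c be a nonzero integer, and suppose that 2^c = φ(m^a)/φ(n^b) and 2^c = φ(m'^a)/φ(n'^b) are proper representations with m, n, m', n' positive integers. Then m = m' and n = n'; moreover m, n, m', n' are all powers of 2. -/

import Mathlib

/-- A representation `r = φ(m^a)/φ(n^b)` is *proper* if there are no positive
integers `d₁ > 1`, `d₂`, `m₁`, `n₁` with `m = m₁·d₁`, `n = n₁·d₂`, `d₁^a = d₂^b`,
such that every prime `p ∣ d₁·d₂` satisfies `p ∣ gcd(m₁, n₁)` or
`gcd(p, m₁·n₁) = 1`. -/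
def IsProperRep (a b m n : ℕ) : Prop :=
  ¬ ∃ d₁ d₂ m₁ n₁ : ℕ,
      1 < d₁ ∧ 0 < d₂ ∧ 0 < m₁ ∧ 0 < n₁ ∧
      m = m₁ * d₁ ∧ n = n₁ * d₂ ∧ d₁ ^ a = d₂ ^ b ∧
      ∀ p : ℕ, p.Prime → p ∣ d₁ * d₂ →
        p ∣ Nat.gcd m₁ n₁ ∨ Nat.Coprime p (m₁ * n₁)

/-!
Let `P` be the largest prime factor of `m * n`. Every prime `q` dividing `m ^ a` or `n ^ b` has
`q - 1 < P`, so `v_P (φ x) = v_P x - 1` (truncated at `0`) for `x = m ^ a` and `x = n ^ b`.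
If `P` were odd, comparing `P`-adic valuations in `2 ^ c * φ (n ^ b) = φ (m ^ a)` would give
`a * v_P m = b * v_P n`, and splitting off the `P`-parts of `m` and `n` would show that the
representation is not proper. Hence `m = 2 ^ i`, `n = 2 ^ j` and `c = (i a - 1) - (j b - 1)`.
Modulo `g = gcd a b ≥ 2`, and since `c ≠ 0`, this determines which of `i`, `j` vanish, so two
solutions satisfy `(i - i') a = (j - j') b`. They then differ by a nonzero multiple of
`(b / g, a / g)`, which properness (`i ≤ b / g` or `j ≤ a / g`) rules out.
-/

open Nat

namespace Nat

theorem not_dvd_totient_of_forall_lt {p r : ℕ} (hp : p.Prime) (hr : r ≠ 0)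
    (h : ∀ q ∈ r.primeFactors, q < p) : ¬ p ∣ φ r := by
  rw [totient_eq_prod_factorization hr, Prime.dvd_finsuppProd_iff hp.prime]
  rintro ⟨q, hq, hdvd⟩
  rw [support_factorization] at hq
  have hqp := h q hq
  rcases hp.dvd_mul.mp hdvd with hpow | hpred
  · exact hqp.ne' ((prime_dvd_prime_iff_eq hp (prime_of_mem_primeFactors hq)).mp
      (hp.dvd_of_dvd_pow hpow))
  · have := le_of_dvd (by have := (prime_of_mem_primeFactors hq).one_lt; omega) hpred
    omega

theorem factorization_totient_of_forall_le {p x : ℕ} (hp : p.Prime) (hx : x ≠ 0)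
    (h : ∀ q ∈ x.primeFactors, q ≤ p) :
    (φ x).factorization p = x.factorization p - 1 := by
  set k := x.factorization p
  have hr : ordCompl[p] x ≠ 0 := (ordCompl_pos p hx).ne'
  have hsplit : φ x = φ (p ^ k) * φ (ordCompl[p] x) := by
    rw [← totient_mul ((coprime_ordCompl hp hx).pow_left k), ordProj_mul_ordCompl_eq_self]
  have hcompl : ¬ p ∣ φ (ordCompl[p] x) := by
    refine not_dvd_totient_of_forall_lt hp hr fun q hq => (h q ?_).lt_of_ne ?_
    · exact primeFactors_mono (ordCompl_dvd x p) hx hq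
    · rintro rfl
      exact not_dvd_ordCompl hp hx (dvd_of_mem_primeFactors hq)
  rw [hsplit, factorization_mul (totient_pos.mpr (pow_pos hp.pos k)).ne'
    (totient_pos.mpr (pos_of_ne_zero hr)).ne', Finsupp.add_apply,
    factorization_eq_zero_of_not_dvd hcompl, add_zero]
  rcases k.eq_zero_or_pos with hk | hk
  · simp [hk]
  · have hp1 := hp.one_lt
    have hpred : ¬ p ∣ p - 1 := fun hd => by
      have := le_of_dvd (by omega) hd
      omega
    rw [totient_prime_pow hp hk, factorization_mul (pow_ne_zero _ hp.ne_zero)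
      (by omega), Finsupp.add_apply, hp.factorization_pow,
      factorization_eq_zero_of_not_dvd hpred]
    simp

theorem div_gcd_dvd_of_mul_eq_mul {a b u v : ℕ} (hb : 0 < b) (h : u * a = v * b) :
    b / gcd a b ∣ u := by
  have hg : 0 < gcd a b := gcd_pos_of_pos_right a hb
  have hdiv : u * (a / gcd a b) = v * (b / gcd a b) := by
    apply Nat.eq_of_mul_eq_mul_right hg
    rw [mul_assoc, Nat.div_mul_cancel (gcd_dvd_left a b), mul_assoc,
      Nat.div_mul_cancel (gcd_dvd_right a b), h]
  exact (coprime_div_gcd_div_gcd hg).symm.dvd_of_dvd_mul_right ⟨v, by rw [hdiv, mul_comm]⟩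

theorem mul_eq_mul_of_mul_sub_one_eq {a b α β : ℕ} (ha : 2 ≤ a) (hb : 2 ≤ b)
    (h : a * α - 1 = b * β - 1) (hαβ : α ≠ 0 ∨ β ≠ 0) : α ≠ 0 ∧ a * α = b * β := by
  rcases α.eq_zero_or_pos with rfl | hα <;> rcases β.eq_zero_or_pos with rfl | hβ
  · simp at hαβ
  · have : 2 ≤ b * β := by nlinarith
    omega
  · have : 2 ≤ a * α := by nlinarith
    omega
  · have : 2 ≤ a * α := by nlinarith
    have : 2 ≤ b * β := by nlinarith
    omega

end Nat

theorem factorization_sub_factorization_of_two_zpow_eq_div {p A B : ℕ} (hp : p.Prime)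
    (hA : A ≠ 0) (hB : B ≠ 0) {c : ℤ} (h : (2 : ℚ) ^ c = A / B) :
    c * padicValNat p 2 = A.factorization p - B.factorization p := by
  have := Fact.mk hp
  have hval := congrArg (padicValRat p) h
  rw [padicValRat.zpow, padicValRat.div (by positivity) (by positivity), padicValRat.of_nat,
    padicValRat.of_nat, ← factorization_def _ hp, ← factorization_def _ hp] at hval
  exact_mod_cast hval

theorem not_isProperRep_of_mul_factorization_eq {a b m n p : ℕ} (hp : p.Prime) (hm : m ≠ 0)
    (hn : n ≠ 0) (hpm : p ∣ m) (h : a * m.factorization p = b * n.factorization p) :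
    ¬ IsProperRep a b m n := fun hproper => hproper
  ⟨p ^ m.factorization p, p ^ n.factorization p, ordCompl[p] m, ordCompl[p] n,
    one_lt_pow (hp.factorization_pos_of_dvd hm hpm).ne' hp.one_lt, pow_pos hp.pos _,
    ordCompl_pos p hm, ordCompl_pos p hn,
    by rw [mul_comm, ordProj_mul_ordCompl_eq_self], by rw [mul_comm, ordProj_mul_ordCompl_eq_self],
    by rw [← pow_mul, ← pow_mul, mul_comm, h, mul_comm],
    fun q hq hqd => by
      obtain rfl : q = p := (prime_dvd_prime_iff_eq hq hp).mp
        (hq.dvd_of_dvd_pow (pow_add p _ _ ▸ hqd))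
      exact Or.inr ((coprime_ordCompl hq hm).mul_right (coprime_ordCompl hq hn))⟩

theorem le_or_le_of_isProperRep_two_pow {a b i j : ℕ} (hb : 0 < b)
    (h : IsProperRep a b (2 ^ i) (2 ^ j)) : i ≤ b / Nat.gcd a b ∨ j ≤ a / Nat.gcd a b := by
  by_contra! hlt
  set g := Nat.gcd a b
  have hg : 0 < g := Nat.gcd_pos_of_pos_right a hb
  have hexp : b / g * a = a / g * b := by
    rw [mul_comm, ← Nat.mul_div_assoc _ (Nat.gcd_dvd_right a b), mul_comm a b,
      Nat.mul_div_assoc _ (Nat.gcd_dvd_left a b), mul_comm]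
  refine h ⟨2 ^ (b / g), 2 ^ (a / g), 2 ^ (i - b / g), 2 ^ (j - a / g),
    Nat.one_lt_two_pow (Nat.div_pos (le_of_dvd hb (Nat.gcd_dvd_right a b)) hg).ne',
    by positivity, by positivity, by positivity, by rw [← pow_add]; congr 1; omega,
    by rw [← pow_add]; congr 1; omega, by rw [← pow_mul, ← pow_mul, hexp], fun q hq hqd => ?_⟩
  obtain rfl : q = 2 := (prime_dvd_prime_iff_eq hq prime_two).mp
    (hq.dvd_of_dvd_pow (pow_add 2 _ _ ▸ hqd))
  exact Or.inl (Nat.dvd_gcd (dvd_pow_self 2 (by omega)) (dvd_pow_self 2 (by omega)))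

theorem exists_eq_two_pow_of_isProperRep {a b m n : ℕ} (ha : 2 ≤ a) (hb : 2 ≤ b) (hm : m ≠ 0)
    (hn : n ≠ 0)
    (hodd : ∀ p, p.Prime → p ≠ 2 → (φ (m ^ a)).factorization p = (φ (n ^ b)).factorization p)
    (hproper : IsProperRep a b m n) : (∃ i, m = 2 ^ i) ∧ ∃ j, n = 2 ^ j := by
  obtain ⟨k, hk⟩ | ⟨q, hq, hqmn, hqodd⟩ := (m * n).eq_two_pow_or_exists_odd_prime_and_dvd
  · exact ⟨((Nat.dvd_prime_pow prime_two).mp (hk ▸ dvd_mul_right m n)).imp fun _ => And.right,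
      ((Nat.dvd_prime_pow prime_two).mp (hk ▸ dvd_mul_left n m)).imp fun _ => And.right⟩
  exfalso
  have hne : (m * n).primeFactors.Nonempty :=
    ⟨q, mem_primeFactors.mpr ⟨hq, hqmn, mul_ne_zero hm hn⟩⟩
  obtain ⟨P, hPmem, hle⟩ : ∃ P ∈ (m * n).primeFactors, ∀ r ∈ (m * n).primeFactors, r ≤ P :=
    ⟨_, (m * n).primeFactors.max'_mem hne, (m * n).primeFactors.le_max'⟩
  obtain ⟨hP, hPmn, -⟩ := mem_primeFactors.mp hPmem
  rw [primeFactors_mul hm hn] at hle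
  have hP2 : P ≠ 2 := fun hP2 => by
    have := hle q (primeFactors_mul hm hn ▸ mem_primeFactors.mpr ⟨hq, hqmn, mul_ne_zero hm hn⟩)
    obtain rfl : q = 2 := by have := hq.two_le; omega
    exact Nat.not_odd_iff_even.mpr even_two hqodd
  have hleₘ : ∀ r ∈ (m ^ a).primeFactors, r ≤ P := fun r hr =>
    hle r (Finset.mem_union_left _ (primeFactors_pow m (show a ≠ 0 by omega) ▸ hr))
  have hleₙ : ∀ r ∈ (n ^ b).primeFactors, r ≤ P := fun r hr =>
    hle r (Finset.mem_union_right _ (primeFactors_pow n (show b ≠ 0 by omega) ▸ hr))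
  have hv := hodd P hP hP2
  rw [factorization_totient_of_forall_le hP (pow_ne_zero a hm) hleₘ,
    factorization_totient_of_forall_le hP (pow_ne_zero b hn) hleₙ,
    factorization_pow, factorization_pow] at hv
  simp only [Finsupp.smul_apply, smul_eq_mul] at hv
  have hpos : m.factorization P ≠ 0 ∨ n.factorization P ≠ 0 :=
    (hP.dvd_mul.mp hPmn).imp (hP.factorization_pos_of_dvd hm · |>.ne')
      (hP.factorization_pos_of_dvd hn · |>.ne')
  obtain ⟨hα, hαβ⟩ := mul_eq_mul_of_mul_sub_one_eq ha hb hv hpos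
  exact not_isProperRep_of_mul_factorization_eq hP hm hn (dvd_of_factorization_pos hα) hαβ hproper

theorem IsProperRep.exists_two_pow_of_two_zpow_eq {a b m n : ℕ} {c : ℤ} (ha : 2 ≤ a) (hb : 2 ≤ b)
    (hm : m ≠ 0) (hn : n ≠ 0) (hrep : (2 : ℚ) ^ c = φ (m ^ a) / φ (n ^ b))
    (hproper : IsProperRep a b m n) :
    ∃ i j, m = 2 ^ i ∧ n = 2 ^ j ∧ c = ((i * a - 1 : ℕ) : ℤ) - (j * b - 1 : ℕ) := by
  have hval := fun (p : ℕ) (hp : p.Prime) => factorization_sub_factorization_of_two_zpow_eq_div hp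
    (totient_pos.mpr (pos_of_ne_zero (pow_ne_zero a hm))).ne'
    (totient_pos.mpr (pos_of_ne_zero (pow_ne_zero b hn))).ne' hrep
  have hodd : ∀ p, p.Prime → p ≠ 2 →
      (φ (m ^ a)).factorization p = (φ (n ^ b)).factorization p := fun p hp hp2 => by
    have hp₂ := hval p hp
    rw [padicValNat.eq_zero_of_not_dvd fun h => hp2 ((prime_dvd_prime_iff_eq hp prime_two).mp h)]
      at hp₂
    omega
  obtain ⟨⟨i, rfl⟩, j, rfl⟩ := exists_eq_two_pow_of_isProperRep ha hb hm hn hodd hproper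
  refine ⟨i, j, rfl, rfl, ?_⟩
  have hle₂ : ∀ k l, ∀ q ∈ ((2 ^ k) ^ l).primeFactors, q ≤ 2 := fun k l q hq =>
    le_of_dvd two_pos ((prime_of_mem_primeFactors hq).dvd_of_dvd_pow
      (pow_mul 2 k l ▸ dvd_of_mem_primeFactors hq))
  have h₂ := hval 2 prime_two
  rw [padicValNat_self, factorization_totient_of_forall_le prime_two (by positivity) (hle₂ i a),
    factorization_totient_of_forall_le prime_two (by positivity) (hle₂ j b)] at h₂
  simpa [← pow_mul, prime_two.factorization] using h₂

theorem eq_zero_iff_of_sub_one_sub_sub_one_eq {g x y x' y' : ℕ} (hg : g ≠ 1) (hx : g ∣ x)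
    (hy : g ∣ y) (hx' : g ∣ x') (hy' : g ∣ y')
    (h : ((x - 1 : ℕ) : ℤ) - (y - 1 : ℕ) = (x' - 1 : ℕ) - (y' - 1 : ℕ))
    (hc : ((x - 1 : ℕ) : ℤ) - (y - 1 : ℕ) ≠ 0) : (x = 0 ↔ x' = 0) ∧ (y = 0 ↔ y' = 0) := by
  have hdvd : (g : ℤ) ∣ x - y - (x' - y') := by
    simp only [← Int.natCast_dvd_natCast] at hx hy hx' hy'
    exact (hx.sub hy).sub (hx'.sub hy')
  have hone : ¬ (g : ℤ) ∣ 1 := by exact_mod_cast mt Nat.dvd_one.mp hg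
  have hne₁ : (x : ℤ) - y - (x' - y') ≠ 1 := fun e => hone (e ▸ hdvd)
  have hne₂ : (x : ℤ) - y - (x' - y') ≠ -1 := fun e => hone (dvd_neg.mp (e ▸ hdvd))
  omega

theorem eq_and_eq_of_mul_sub_mul_eq {a b i j i' j' : ℕ} (ha : 0 < a) (hb : 0 < b)
    (h : (i * a : ℤ) - j * b = i' * a - j' * b) (hi : i = 0 ↔ i' = 0) (hj : j = 0 ↔ j' = 0)
    (hsmall : i ≤ b / Nat.gcd a b ∨ j ≤ a / Nat.gcd a b)
    (hsmall' : i' ≤ b / Nat.gcd a b ∨ j' ≤ a / Nat.gcd a b) : i = i' ∧ j = j' := by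
  wlog hle : i' ≤ i generalizing i j i' j'
  · obtain ⟨rfl, rfl⟩ := this h.symm hi.symm hj.symm hsmall' hsmall (by omega)
    exact ⟨rfl, rfl⟩
  rcases hle.eq_or_lt with rfl | hlt
  · have hjb : (j : ℤ) * b = j' * b := by linarith
    exact ⟨rfl, by exact_mod_cast mul_right_cancel₀ (by positivity : (b : ℤ) ≠ 0) hjb⟩
  · have hlt' : j' < j := by
      have : (i' : ℤ) < i := by exact_mod_cast hlt
      by_contra! hji
      have : (j : ℤ) ≤ j' := by exact_mod_cast hji
      nlinarith
    have heq : (i - i') * a = (j - j') * b := by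
      zify [hlt.le, hlt'.le]
      linear_combination h
    have hdi := Nat.le_of_dvd (by omega) (Nat.div_gcd_dvd_of_mul_eq_mul hb heq)
    have hdj := Nat.le_of_dvd (by omega)
      (Nat.gcd_comm a b ▸ Nat.div_gcd_dvd_of_mul_eq_mul ha heq.symm)
    omega

theorem stmt_14 (a b : ℕ) (ha : 0 < a) (hb : 0 < b) (hab : 1 < Nat.gcd a b)
    (c : ℤ) (hc : c ≠ 0) (m n m' n' : ℕ)
    (hm : 0 < m) (hn : 0 < n) (hm' : 0 < m') (hn' : 0 < n')
    (hrep : (2 : ℚ) ^ c = (Nat.totient (m ^ a) : ℚ) / (Nat.totient (n ^ b) : ℚ))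
    (hproper : IsProperRep a b m n)
    (hrep' : (2 : ℚ) ^ c = (Nat.totient (m' ^ a) : ℚ) / (Nat.totient (n' ^ b) : ℚ))
    (hproper' : IsProperRep a b m' n') :
    (m = m' ∧ n = n') ∧
      ((∃ i : ℕ, m = 2 ^ i) ∧ (∃ j : ℕ, n = 2 ^ j) ∧
       (∃ i : ℕ, m' = 2 ^ i) ∧ (∃ j : ℕ, n' = 2 ^ j)) := by
  have ha₂ : 2 ≤ a := hab.trans_le (Nat.le_of_dvd ha (Nat.gcd_dvd_left a b))
  have hb₂ : 2 ≤ b := hab.trans_le (Nat.le_of_dvd hb (Nat.gcd_dvd_right a b))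
  obtain ⟨i, j, rfl, rfl, hc₁⟩ :=
    hproper.exists_two_pow_of_two_zpow_eq ha₂ hb₂ hm.ne' hn.ne' hrep
  obtain ⟨i', j', rfl, rfl, hc₂⟩ :=
    hproper'.exists_two_pow_of_two_zpow_eq ha₂ hb₂ hm'.ne' hn'.ne' hrep'
  have hga := Nat.gcd_dvd_left a b
  have hgb := Nat.gcd_dvd_right a b
  obtain ⟨hi, hj⟩ := eq_zero_iff_of_sub_one_sub_sub_one_eq hab.ne' (hga.mul_left i)
    (hgb.mul_left j) (hga.mul_left i') (hgb.mul_left j') (hc₁.symm.trans hc₂) (hc₁ ▸ hc)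
  obtain ⟨rfl, rfl⟩ := eq_and_eq_of_mul_sub_mul_eq ha hb (by omega)
    (by simpa [ha.ne'] using hi) (by simpa [hb.ne'] using hj)
    (le_or_le_of_isProperRep_two_pow hb hproper) (le_or_le_of_isProperRep_two_pow hb hproper')
  exact ⟨⟨rfl, rfl⟩, ⟨i, rfl⟩, ⟨j, rfl⟩, ⟨i, rfl⟩, ⟨j, rfl⟩⟩
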